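/- A linear network code with wiretap observation X_W = [A_W B_W](M; N)^T, where M is uniform on F_q^R, N is uniform on F_q^z, and M, N are independent, satisfies I(M; X_W) = 0 if and only if rank([A_W B_W]) = rank(B_W). -/

import Mathlib

open scoped BigOperators

/-- Distribution of a random variable `X` on a finite probability space with weights `w`. -/
noncomputable def pdist {Ω α : Type*} [Fintype Ω] [Fintype α] [DecidableEq α]
    (w : Ω → ℝ) (X : Ω → α) (x : α) : ℝ :=
  ∑ ω : Ω, if X ω = x then w ω else 0

/-- Shannon entropy `H(X)` (natural log, with the convention `0 log 0 = 0`). -/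
noncomputable def Hent {Ω α : Type*} [Fintype Ω] [Fintype α] [DecidableEq α]
    (w : Ω → ℝ) (X : Ω → α) : ℝ :=
  ∑ x : α, Real.negMulLog (pdist w X x)

/-- Conditional entropy `H(Y | X) = H(X, Y) - H(X)`. -/
noncomputable def condH {Ω α β : Type*} [Fintype Ω] [Fintype α] [DecidableEq α]
    [Fintype β] [DecidableEq β] (w : Ω → ℝ) (Y : Ω → β) (X : Ω → α) : ℝ :=
  Hent w (fun ω => (X ω, Y ω)) - Hent w X

/-- Mutual information `I(X ; Y) = H(X) + H(Y) - H(X, Y)`. -/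
noncomputable def MI {Ω α β : Type*} [Fintype Ω] [Fintype α] [DecidableEq α]
    [Fintype β] [DecidableEq β] (w : Ω → ℝ) (X : Ω → α) (Y : Ω → β) : ℝ :=
  Hent w X + Hent w Y - Hent w (fun ω => (X ω, Y ω))

/-- Conditional mutual information `I(M ; Y | X) = H(M|X) + H(Y|X) - H(M,Y|X)`. -/
noncomputable def condMI {Ω α β γ : Type*} [Fintype Ω] [Fintype α] [DecidableEq α]
    [Fintype β] [DecidableEq β] [Fintype γ] [DecidableEq γ]
    (w : Ω → ℝ) (M : Ω → α) (Y : Ω → β) (X : Ω → γ) : ℝ :=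
  condH w M X + condH w Y X - condH w (fun ω => (M ω, Y ω)) X

lemma pdist_uniform {Ω α : Type*} [Fintype Ω] [Fintype α] [DecidableEq α]
    (f : Ω → α) (x : α) :
    pdist (fun _ => 1 / (Fintype.card Ω : ℝ)) f x
      = ((Finset.univ.filter fun ω => f ω = x).card : ℝ) / (Fintype.card Ω : ℝ) := by
  classical
  unfold pdist
  have h : (∑ ω : Ω, if f ω = x then (1:ℝ)/(Fintype.card Ω : ℝ) else 0)
      = ∑ ω ∈ Finset.univ.filter (fun ω => f ω = x), (1:ℝ)/(Fintype.card Ω : ℝ) :=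
    (Finset.sum_filter _ _).symm
  beta_reduce
  rw [h, Finset.sum_const]
  simp [div_eq_mul_inv]

lemma Hent_uniform {Ω α : Type*} [Fintype Ω] [Nonempty Ω] [Fintype α] [DecidableEq α]
    [DecidableEq Ω]
    (f : Ω → α) (K : ℕ)
    (hK : ∀ a : Ω, (Finset.univ.filter fun ω => f ω = f a).card = K) :
    Hent (fun _ => 1 / (Fintype.card Ω : ℝ)) f
      = Real.log (Fintype.card Ω) - Real.log K := by
  classical
  set c := Fintype.card Ω with hc
  have hc0 : 0 < c := Fintype.card_pos
  obtain ⟨a0⟩ := (inferInstance : Nonempty Ω)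
  have hK0 : 0 < K := by
    rw [← hK a0]
    exact Finset.card_pos.2 ⟨a0, by simp⟩
  -- image of f
  set T := Finset.univ.image f with hT
  have hfiber : ∀ x : α, (Finset.univ.filter fun ω => f ω = x).card = if x ∈ T then K else 0 := by
    intro x
    by_cases hx : x ∈ T
    · obtain ⟨a, _, rfl⟩ := Finset.mem_image.1 hx
      simp [hx, hK a]
    · simp only [hx, if_false]
      rw [Finset.card_eq_zero, Finset.filter_eq_empty_iff]
      intro ω _
      exact fun h => hx (Finset.mem_image.2 ⟨ω, Finset.mem_univ ω, h⟩)
  have hpart : T.card * K = c := by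
    have := Finset.card_eq_sum_card_fiberwise (f := f) (s := Finset.univ) (t := T)
      (fun x _ => Finset.mem_image_of_mem f (Finset.mem_univ x))
    rw [hc, ← Finset.card_univ, this]
    rw [Finset.sum_congr rfl (fun x hx => by rw [hfiber x, if_pos hx])]
    simp [Finset.sum_const, mul_comm]
  have hHent : Hent (fun _ => 1 / (c : ℝ)) f
      = T.card * Real.negMulLog ((K : ℝ) / c) := by
    unfold Hent
    rw [← Finset.sum_filter_add_sum_filter_not Finset.univ (· ∈ T)]
    have h1 : ∀ x ∈ Finset.univ.filter (· ∈ T),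
        Real.negMulLog (pdist (fun _ => 1 / (c : ℝ)) f x) = Real.negMulLog ((K : ℝ)/c) := by
      intro x hx
      rw [pdist_uniform, hfiber x, if_pos (Finset.mem_filter.1 hx).2]
    have h2 : ∀ x ∈ Finset.univ.filter (· ∉ T),
        Real.negMulLog (pdist (fun _ => 1 / (c : ℝ)) f x) = 0 := by
      intro x hx
      rw [pdist_uniform, hfiber x, if_neg (Finset.mem_filter.1 hx).2]
      simp [Real.negMulLog_zero]
    rw [Finset.sum_congr rfl h1, Finset.sum_congr rfl h2]
    simp [nsmul_eq_mul, Finset.filter_univ_mem]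
  rw [hHent]
  have hKc : (K : ℝ) / c ≠ 0 := by positivity
  rw [Real.negMulLog]
  have hTcard : (T.card : ℝ) = (c : ℝ) / K := by
    field_simp
    exact_mod_cast hpart
  rw [hTcard]
  have hc0' : (c:ℝ) ≠ 0 := by positivity
  have hK0' : (K:ℝ) ≠ 0 := by positivity
  rw [Real.log_div hK0' hc0']
  field_simp
  ring

lemma fiber_card_const {Ω α : Type*} [Fintype Ω] [Fintype α] [DecidableEq α]
    [AddGroup Ω] [AddGroup α]
    (f : Ω → α) (hf : ∀ x y, f (x - y) = f x - f y) (a : Ω) :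
    (Finset.univ.filter fun ω => f ω = f a).card
      = (Finset.univ.filter fun ω => f ω = 0).card := by
  classical
  apply Finset.card_bij' (fun ω _ => ω - a) (fun ω _ => ω + a)
  · intro ω hω
    simp only [Finset.mem_filter, Finset.mem_univ, true_and] at hω ⊢
    rw [hf, hω, sub_self]
  · intro ω hω
    simp only [Finset.mem_filter, Finset.mem_univ, true_and] at hω ⊢
    have h3 := hf (ω + a) a
    simp only [add_sub_cancel_right] at h3
    rw [eq_sub_iff_add_eq] at h3
    rw [← h3, hω, zero_add]
  · intros; simp
  · intros; simp

/-- Cai–Yeung security criterion: With `M` uniform on `F_q^R` and `N`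
uniform on `F_q^z` independent (modelled by the uniform weight on the product space),
the wiretap observation `X_W = A_W M + B_W N` satisfies `I(M ; X_W) = 0` if and only if
`rank [A_W  B_W] = rank B_W`. -/
theorem stmt_12 (F : Type*) [Field F] [Fintype F] [DecidableEq F] (R z : ℕ)
    (AW : Matrix (Fin z) (Fin R) F) (BW : Matrix (Fin z) (Fin z) F) :
    MI (fun _ : (Fin R → F) × (Fin z → F) =>
          (1 : ℝ) / (Fintype.card ((Fin R → F) × (Fin z → F)) : ℝ))
        (fun ω => ω.1)
        (fun ω => AW.mulVec ω.1 + BW.mulVec ω.2) = 0 ↔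
      (Matrix.fromCols AW BW).rank = BW.rank := by
  classical
  set Ω := (Fin R → F) × (Fin z → F) with hΩ
  set q := Fintype.card F with hq
  have hq1 : 1 < q := Fintype.one_lt_card
  have hq0 : (0:ℝ) < q := by positivity
  -- the three random variables
  set X : Ω → (Fin R → F) := fun ω => ω.1 with hX
  set Y : Ω → (Fin z → F) := fun ω => AW.mulVec ω.1 + BW.mulVec ω.2 with hY
  set XY : Ω → (Fin R → F) × (Fin z → F) := fun ω => (X ω, Y ω) with hXY
  -- subtractivity
  have hsubX : ∀ x y : Ω, X (x - y) = X x - X y := fun x y => rfl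
  have hsubY : ∀ x y : Ω, Y (x - y) = Y x - Y y := by
    intro x y
    show AW.mulVec (x.1 - y.1) + BW.mulVec (x.2 - y.2)
        = (AW.mulVec x.1 + BW.mulVec x.2) - (AW.mulVec y.1 + BW.mulVec y.2)
    rw [Matrix.mulVec_sub, Matrix.mulVec_sub]
    abel
  have hsubXY : ∀ x y : Ω, XY (x - y) = XY x - XY y := by
    intro x y
    show (X (x-y), Y (x-y)) = (X x, Y x) - (X y, Y y)
    rw [hsubX, hsubY]; rfl
  -- kernel cardinalities
  set K1 := (Finset.univ.filter fun ω : Ω => X ω = 0).card with hK1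
  set K2 := (Finset.univ.filter fun ω : Ω => Y ω = 0).card with hK2
  set K3 := (Finset.univ.filter fun ω : Ω => XY ω = 0).card with hK3
  -- K1 = q^z
  have hK1v : K1 = q ^ z := by
    rw [hK1, ← Fintype.card_subtype]
    have e : {ω : Ω // X ω = 0} ≃ (Fin z → F) :=
      { toFun := fun ω => ω.1.2
        invFun := fun n => ⟨(0, n), rfl⟩
        left_inv := by rintro ⟨⟨m, n⟩, h⟩; simp only [hX] at h; simp [h]
        right_inv := fun n => rfl }
    rw [Fintype.card_congr e]
    simp [hq]
  -- K2 = q ^ finrank (ker ([A B]).mulVecLin)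
  have hK2v : K2 = q ^ Module.finrank F (LinearMap.ker (Matrix.fromCols AW BW).mulVecLin) := by
    rw [hK2, ← Fintype.card_subtype]
    have e : {ω : Ω // Y ω = 0} ≃ LinearMap.ker (Matrix.fromCols AW BW).mulVecLin :=
      { toFun := fun ω => ⟨Sum.elim ω.1.1 ω.1.2, by
          have h := ω.2
          simp only [hY] at h
          simp [LinearMap.mem_ker, Matrix.mulVecLin_apply, Matrix.fromCols_mulVec_sumElim, h]⟩
        invFun := fun v => ⟨(v.1 ∘ Sum.inl, v.1 ∘ Sum.inr), by
          have h := v.2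
          rw [LinearMap.mem_ker, Matrix.mulVecLin_apply] at h
          have hv : Sum.elim (v.1 ∘ Sum.inl) (v.1 ∘ Sum.inr) = v.1 := Sum.elim_comp_inl_inr v.1
          show AW.mulVec (v.1 ∘ Sum.inl) + BW.mulVec (v.1 ∘ Sum.inr) = 0
          rw [← Matrix.fromCols_mulVec_sumElim, hv, h]⟩
        left_inv := by rintro ⟨⟨m, n⟩, h⟩; rfl
        right_inv := by
          rintro ⟨v, h⟩
          apply Subtype.ext
          exact Sum.elim_comp_inl_inr v }
    rw [Fintype.card_congr e]
    exact Module.card_eq_pow_finrank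
  -- K3 = q ^ finrank (ker BW.mulVecLin)
  have hK3v : K3 = q ^ Module.finrank F (LinearMap.ker BW.mulVecLin) := by
    rw [hK3, ← Fintype.card_subtype]
    have e : {ω : Ω // XY ω = 0} ≃ LinearMap.ker BW.mulVecLin :=
      { toFun := fun ω => ⟨ω.1.2, by
          have h1 : X ω.1 = 0 := congrArg Prod.fst ω.2
          have h2 : Y ω.1 = 0 := congrArg Prod.snd ω.2
          simp only [hY] at h2
          simp only [hX] at h1
          rw [LinearMap.mem_ker, Matrix.mulVecLin_apply]
          rw [h1, Matrix.mulVec_zero, zero_add] at h2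
          exact h2⟩
        invFun := fun v => ⟨(0, v.1), by
          have h := v.2
          rw [LinearMap.mem_ker, Matrix.mulVecLin_apply] at h
          show ((0 : Fin R → F), AW.mulVec 0 + BW.mulVec v.1) = 0
          rw [Matrix.mulVec_zero, zero_add, h]; rfl⟩
        left_inv := by
          rintro ⟨⟨m, n⟩, h⟩
          have h1 : m = 0 := congrArg Prod.fst h
          apply Subtype.ext
          simp [h1]
        right_inv := by rintro ⟨v, h⟩; rfl }
    rw [Fintype.card_congr e]
    exact Module.card_eq_pow_finrank
  -- card Ω
  have hcΩ : Fintype.card Ω = q ^ (R + z) := by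
    simp [hΩ, hq, pow_add]
  -- entropies
  have hH1 : Hent (fun _ : Ω => (1:ℝ) / (Fintype.card Ω : ℝ)) X
      = Real.log (Fintype.card Ω) - Real.log K1 :=
    Hent_uniform X K1 (fun a => by
      rw [hK1]; exact (fiber_card_const X hsubX a).trans (by norm_num))
  have hH2 : Hent (fun _ : Ω => (1:ℝ) / (Fintype.card Ω : ℝ)) Y
      = Real.log (Fintype.card Ω) - Real.log K2 :=
    Hent_uniform Y K2 (fun a => by
      rw [hK2]; exact (fiber_card_const Y hsubY a).trans (by norm_num))
  have hH3 : Hent (fun _ : Ω => (1:ℝ) / (Fintype.card Ω : ℝ)) XY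
      = Real.log (Fintype.card Ω) - Real.log K3 :=
    Hent_uniform XY K3 (fun a => by
      rw [hK3]; exact (fiber_card_const XY hsubXY a).trans (by norm_num))
  -- rank-nullity
  set a := (Matrix.fromCols AW BW).rank with ha
  set b := BW.rank with hb
  have hrn2 : a + Module.finrank F (LinearMap.ker (Matrix.fromCols AW BW).mulVecLin) = R + z := by
    have := LinearMap.finrank_range_add_finrank_ker (Matrix.fromCols AW BW).mulVecLin
    rw [Module.finrank_fintype_fun_eq_card] at this
    simpa [ha, Matrix.rank] using this
  have hrn3 : b + Module.finrank F (LinearMap.ker BW.mulVecLin) = z := by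
    have := LinearMap.finrank_range_add_finrank_ker BW.mulVecLin
    rw [Module.finrank_fintype_fun_eq_card] at this
    simpa [hb, Matrix.rank] using this
  -- compute MI
  have hMI : MI (fun _ : Ω => (1:ℝ) / (Fintype.card Ω : ℝ)) X Y
      = ((a : ℝ) - (b : ℝ)) * Real.log q := by
    unfold MI
    rw [hH1, hH2]
    rw [show (Hent (fun _ : Ω => (1:ℝ) / (Fintype.card Ω : ℝ)) fun ω => (X ω, Y ω))
        = Real.log (Fintype.card Ω) - Real.log K3 from hH3]
    rw [hK1v, hK2v, hK3v, hcΩ]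
    push_cast
    rw [Real.log_pow, Real.log_pow, Real.log_pow, Real.log_pow]
    have h2 : (Module.finrank F (LinearMap.ker (Matrix.fromCols AW BW).mulVecLin) : ℝ)
        = (R + z : ℝ) - a := by
      have := congrArg (Nat.cast : ℕ → ℝ) hrn2
      push_cast at this ⊢
      linarith
    have h3 : (Module.finrank F (LinearMap.ker BW.mulVecLin) : ℝ) = (z : ℝ) - b := by
      have := congrArg (Nat.cast : ℕ → ℝ) hrn3
      push_cast at this ⊢
      linarith
    rw [h2, h3]
    push_cast
    ring
  rw [hMI]
  have hlog : Real.log q ≠ 0 := ne_of_gt (Real.log_pos (by exact_mod_cast hq1))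
  constructor
  · intro h
    have := mul_eq_zero.mp h
    rcases this with h' | h'
    · have : (a : ℝ) = b := by linarith [sub_eq_zero.mp h']
      exact_mod_cast this
    · exact absurd h' hlog
  · intro h
    rw [h]
    simp
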